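/- arXiv:2103.10366 — 3 statements merged into one kernel-verified Lean document; each statement's English description precedes it below -/
import Mathlib

section
/- Let X ~ Bin(n,p) with μ = np, and suppose δ ∈ (0,1/2], p ∈ (0,1/2], and δ²μ ≥ 3. Then Pr[X ≥ (1+δ)μ] ≥ exp(-9δ²μ) and Pr[X ≤ (1-δ)μ] ≥ exp(-9δ²μ). -/
open Finset

/-- `Pr[X ≥ t]` for `X ~ Bin(n,p)`. -/
noncomputable def binomTailGE (n : ℕ) (p : ℝ) (t : ℝ) : ℝ :=
  ∑ j ∈ Finset.range (n + 1),
    if t ≤ (j : ℝ) then (n.choose j : ℝ) * p ^ j * (1 - p) ^ (n - j) else 0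

/-- `Pr[X ≤ t]` for `X ~ Bin(n,p)`. -/
noncomputable def binomTailLE (n : ℕ) (p : ℝ) (t : ℝ) : ℝ :=
  ∑ j ∈ Finset.range (n + 1),
    if (j : ℝ) ≤ t then (n.choose j : ℝ) * p ^ j * (1 - p) ^ (n - j) else 0

private noncomputable def Pb (n : ℕ) (p : ℝ) (j : ℕ) : ℝ :=
  (n.choose j : ℝ) * p ^ j * (1 - p) ^ (n - j)

private lemma binom_sum_one (p q : ℝ) (hpq : p + q = 1) (N : ℕ) :
    ∑ j ∈ range (N + 1), (N.choose j : ℝ) * p ^ j * q ^ (N - j) = 1 := by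
  calc ∑ j ∈ range (N + 1), (N.choose j : ℝ) * p ^ j * q ^ (N - j)
      = ∑ j ∈ range (N + 1), p ^ j * q ^ (N - j) * (N.choose j : ℝ) :=
        Finset.sum_congr rfl fun j _ => by ring
    _ = (p + q) ^ N := (add_pow p q N).symm
    _ = 1 := by rw [hpq, one_pow]

private lemma binom_mean (p q : ℝ) (hpq : p + q = 1) (N : ℕ) :
    ∑ j ∈ range (N + 1), (j : ℝ) * ((N.choose j : ℝ) * p ^ j * q ^ (N - j)) = N * p := by
  cases N with
  | zero => simp
  | succ m =>
    rw [Finset.sum_range_succ']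
    simp only [Nat.cast_zero, zero_mul, add_zero]
    have key : ∀ i ∈ range (m + 1),
        ((i + 1 : ℕ) : ℝ) * (((m + 1).choose (i + 1) : ℝ) * p ^ (i + 1) * q ^ (m + 1 - (i + 1))) =
        ((m + 1 : ℕ) : ℝ) * p * ((m.choose i : ℝ) * p ^ i * q ^ (m - i)) := by
      intro i hi
      have h1 : (m + 1) * m.choose i = (m + 1).choose (i + 1) * (i + 1) := Nat.add_one_mul_choose_eq m i
      have h1' : ((m + 1 : ℕ) : ℝ) * (m.choose i : ℝ) = ((m + 1).choose (i + 1) : ℝ) * ((i + 1 : ℕ) : ℝ) := by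
        exact_mod_cast congrArg (Nat.cast : ℕ → ℝ) h1
      have h2 : m + 1 - (i + 1) = m - i := by omega
      rw [h2, pow_succ]
      push_cast at h1' ⊢
      linear_combination (-(p ^ i * p * q ^ (m - i))) * h1'
    rw [Finset.sum_congr rfl key, ← Finset.mul_sum, binom_sum_one p q hpq m]
    push_cast
    ring

private lemma binom_secmom (p q : ℝ) (hpq : p + q = 1) (N : ℕ) :
    ∑ j ∈ range (N + 1), (j : ℝ) * ((j : ℝ) - 1) * ((N.choose j : ℝ) * p ^ j * q ^ (N - j))
      = N * ((N : ℝ) - 1) * p ^ 2 := by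
  cases N with
  | zero => simp
  | succ m =>
    rw [Finset.sum_range_succ']
    simp only [Nat.cast_zero, zero_mul, add_zero]
    have key : ∀ i ∈ range (m + 1),
        ((i + 1 : ℕ) : ℝ) * (((i + 1 : ℕ) : ℝ) - 1) *
            (((m + 1).choose (i + 1) : ℝ) * p ^ (i + 1) * q ^ (m + 1 - (i + 1))) =
        ((m + 1 : ℕ) : ℝ) * p * ((i : ℝ) * ((m.choose i : ℝ) * p ^ i * q ^ (m - i))) := by
      intro i hi
      have h1 : (m + 1) * m.choose i = (m + 1).choose (i + 1) * (i + 1) := Nat.add_one_mul_choose_eq m i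
      have h1' : ((m + 1 : ℕ) : ℝ) * (m.choose i : ℝ) = ((m + 1).choose (i + 1) : ℝ) * ((i + 1 : ℕ) : ℝ) := by
        exact_mod_cast congrArg (Nat.cast : ℕ → ℝ) h1
      have h2 : m + 1 - (i + 1) = m - i := by omega
      rw [h2, pow_succ]
      push_cast at h1' ⊢
      linear_combination (-(i * p ^ i * p * q ^ (m - i))) * h1'
    rw [Finset.sum_congr rfl key, ← Finset.mul_sum, binom_mean p q hpq m]
    push_cast
    ring

private lemma binom_var (n : ℕ) (p q : ℝ) (hpq : p + q = 1) :
    ∑ j ∈ range (n + 1), ((j : ℝ) - n * p) ^ 2 * ((n.choose j : ℝ) * p ^ j * q ^ (n - j))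
      = n * p * q := by
  have e : ∀ j ∈ range (n + 1), ((j : ℝ) - n * p) ^ 2 * ((n.choose j : ℝ) * p ^ j * q ^ (n - j)) =
      (j : ℝ) * ((j : ℝ) - 1) * ((n.choose j : ℝ) * p ^ j * q ^ (n - j))
      + (1 - 2 * ((n : ℝ) * p)) * ((j : ℝ) * ((n.choose j : ℝ) * p ^ j * q ^ (n - j)))
      + ((n : ℝ) * p) ^ 2 * ((n.choose j : ℝ) * p ^ j * q ^ (n - j)) := fun j _ => by ring
  rw [Finset.sum_congr rfl e, Finset.sum_add_distrib, Finset.sum_add_distrib, ← Finset.mul_sum,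
      ← Finset.mul_sum, binom_secmom p q hpq, binom_mean p q hpq, binom_sum_one p q hpq]
  have hq : q = 1 - p := by linarith
  rw [hq]; ring

private lemma step_sq (w : ℝ) :
    2 * max w 0 ≤ (max w 0 + 1) ^ 2 - (max (w - 1) 0 + 1) ^ 2 := by
  rcases le_or_gt w 0 with h | h
  · rw [max_eq_right h, max_eq_right (by linarith)]; norm_num
  · rw [max_eq_left h.le]
    rcases le_or_gt w 1 with h1 | h1
    · rw [max_eq_right (by linarith)]; nlinarith
    · rw [max_eq_left (by linarith)]; nlinarith

private lemma aux_sq_nonneg (w : ℝ) : 0 ≤ ((max w 0 + 1)^2 - 1)/2 := by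
  nlinarith [le_max_right w 0]

private lemma aux_sq_mono (w v : ℝ) (h : w ≤ v) :
    ((max w 0 + 1)^2 - 1)/2 ≤ ((max v 0 + 1)^2 - 1)/2 := by
  have h1 : max w 0 ≤ max v 0 := max_le_max h (le_refl 0)
  nlinarith [le_max_right w 0, le_max_right v 0]

private lemma aux_cost (δ μ K km : ℝ) (hδ0 : 0 < δ) (hμ0 : 0 < μ) (hK0 : 0 < K)
    (hK20 : K ≤ 20/3) (hx : max km 0 + 1 ≤ 1.41*(δ*μ)) :
    (K/μ) * (((max km 0 + 1)^2 - 1)/2) ≤ 7*(δ^2*μ) := by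
  have hx0 : (0:ℝ) ≤ max km 0 + 1 := by linarith [le_max_right km 0]
  have h1 : (max km 0 + 1)^2 ≤ (1.41*(δ*μ))^2 := by nlinarith
  have hKμ : (0:ℝ) ≤ K/μ := div_nonneg hK0.le hμ0.le
  have h2 : (K/μ) * (((max km 0 + 1)^2 - 1)/2) ≤ (K/μ)*((1.41*(δ*μ))^2/2) :=
    mul_le_mul_of_nonneg_left (by linarith) hKμ
  have h3 : (K/μ)*((1.41*(δ*μ))^2/2) = K*(δ^2*μ)*(1.9881/2) := by
    field_simp
    ring
  have hδμ0 : (0:ℝ) ≤ δ^2*μ := by positivity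
  have h4 : K*(δ^2*μ)*(1.9881/2) ≤ (20/3)*(δ^2*μ)*(1.9881/2) := by
    have := mul_le_mul_of_nonneg_right hK20 hδμ0
    linarith
  nlinarith [hδμ0]

private lemma aux_exp (y : ℝ) : (1+y) * Real.exp (-y) ≤ 1 := by
  have h5 := Real.add_one_le_exp y
  have h6 : Real.exp (-y) * Real.exp y = 1 := by
    rw [← Real.exp_add]; simp
  nlinarith [Real.exp_pos (-y), Real.exp_pos y]

private lemma aux_Kinv (δ μ p x : ℝ) (hδ0 : 0 < δ) (hδ1 : δ ≤ 1/2) (hp0 : 0 < p)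
    (hp1 : p ≤ 1/2) (hμ0 : 0 < μ) (hx : x ≤ (1 + 1.4*δ)*μ) :
    μ ≤ (2/(1 - 1.4*δ)) * (μ - x * p) := by
  have h14 : (0.3:ℝ) ≤ 1 - 1.4*δ := by linarith
  have h1 : x * p ≤ ((1+1.4*δ)*μ) * p := mul_le_mul_of_nonneg_right hx hp0.le
  have h2 : μ*(1-1.4*δ)/2 ≤ μ - x*p := by
    nlinarith [mul_nonneg (mul_nonneg (show (0:ℝ) ≤ 1+1.4*δ by linarith)
      (show (0:ℝ) ≤ 1/2 - p by linarith)) hμ0.le]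
  have h3 : (2/(1-1.4*δ)) * (μ*(1-1.4*δ)/2) = μ := by
    field_simp
  have hK0 : (0:ℝ) < 2/(1-1.4*δ) := by positivity
  nlinarith [mul_le_mul_of_nonneg_left h2 hK0.le]

private lemma aux_up (p δ μ ν k K y : ℝ) (hp0 : 0 < p) (hp1 : p ≤ 1/2)
    (hδ0 : 0 < δ) (hδ1 : δ ≤ 1/2) (hμ0 : 0 < μ) (hν : ν * p = μ)
    (hk1 : k + 1 ≤ (1 + 1.4*δ)*μ) (hz : μ < k + 1)
    (hKc : μ ≤ K * (μ - (k+1) * p)) (hK0 : 0 < K) (hy : y * μ = K * (k+1-μ)) :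
    (k+1)*(1-p) ≤ (1+y)*((ν-k)*p) := by
  have hexp : μ*((1+y)*((ν-k)*p) - (k+1)*(1-p))
      = (k+1-μ)*(K*(μ-(k+1)*p) - μ) + K*(k+1-μ)*p + μ*p := by
    linear_combination ((ν-k)*p)*hy + (K*(k+1-μ) + μ)*hν
  have h1 : 0 ≤ (k+1-μ)*(K*(μ-(k+1)*p) - μ) :=
    mul_nonneg (by linarith) (by linarith)
  have h2 : 0 ≤ K*(k+1-μ)*p := mul_nonneg (mul_nonneg hK0.le (by linarith)) hp0.le
  have h3 : 0 < μ*p := mul_pos hμ0 hp0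
  nlinarith [hexp, h1, h2, h3, hμ0]

private lemma aux_down (p μ ν k y : ℝ) (hp0 : 0 < p) (hp1 : p ≤ 1/2)
    (hμ0 : 0 < μ) (hν : ν * p = μ) (hk3 : μ ≤ 3*(k+1)) (hz : k < μ)
    (hy : y * μ = 6*(μ-k)) :
    (ν-k)*p ≤ (1+y)*((k+1)*(1-p)) := by
  have hexp : μ*((1+y)*((k+1)*(1-p)) - (ν-k)*p)
      = (μ-k)*(6*(k+1)*(1-p) - μ) + μ*(1-p) := by
    linear_combination ((k+1)*(1-p))*hy - μ*hν
  have hk0 : (0:ℝ) < 3*(k+1) := by linarith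
  have h1 : 0 ≤ (μ-k)*(6*(k+1)*(1-p) - μ) := by
    apply mul_nonneg (by linarith)
    nlinarith [mul_nonneg hk0.le (show (0:ℝ) ≤ 2*(1-p) - 1 by linarith)]
  have h2 : 0 < μ*(1-p) := mul_pos hμ0 (by linarith)
  nlinarith [hexp, h1, h2, hμ0]

set_option maxHeartbeats 2000000 in
/-- Two-sided anti-concentration bound for binomial tails (Klein–Young). -/
theorem binomial_anti_concentration (n : ℕ) (p δ : ℝ)
    (hδ0 : 0 < δ) (hδ1 : δ ≤ 1 / 2) (hp0 : 0 < p) (hp1 : p ≤ 1 / 2)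
    (hμ : δ ^ 2 * ((n : ℝ) * p) ≥ 3) :
    binomTailGE n p ((1 + δ) * ((n : ℝ) * p)) ≥ Real.exp (-9 * δ ^ 2 * ((n : ℝ) * p)) ∧
    binomTailLE n p ((1 - δ) * ((n : ℝ) * p)) ≥ Real.exp (-9 * δ ^ 2 * ((n : ℝ) * p)) := by
  classical
  set μ : ℝ := (n : ℝ) * p with hμdef
  have hnp : (n : ℝ) * p = μ := rfl
  have hq0 : 0 < 1 - p := by linarith
  have hq2 : (1/2 : ℝ) ≤ 1 - p := by linarith
  have hδ2 : δ ^ 2 ≤ 1/4 := by nlinarith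
  have hμ0 : 0 < μ := by nlinarith [pow_pos hδ0 2]
  have hμ12 : 12 ≤ μ := by nlinarith [mul_le_mul_of_nonneg_right hδ2 hμ0.le]
  have hδμ6 : 6 ≤ δ * μ := by nlinarith
  have hnn : (0:ℝ) ≤ (n:ℝ) := Nat.cast_nonneg n
  have hn2 : 2 * μ ≤ (n : ℝ) := by nlinarith
  set s : ℝ := Real.sqrt μ with hsdef
  have hs0 : 0 < s := Real.sqrt_pos.mpr hμ0
  have hs2 : s ^ 2 = μ := Real.sq_sqrt hμ0.le
  have hs34 : (3.4 : ℝ) ≤ s := by nlinarith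
  have hδs : (1.7:ℝ) ≤ δ * s := by nlinarith [mul_pos hδ0 hs0]
  have hsδμ : 1.7 * s ≤ δ * μ := by nlinarith [mul_le_mul_of_nonneg_right hδs hs0.le]
  have hP0 : ∀ j, 0 ≤ Pb n p j := by
    intro j
    exact mul_nonneg (mul_nonneg (by positivity) (by positivity)) (pow_nonneg hq0.le _)
  have hpq : p + (1 - p) = 1 := by ring
  have hsum1 : ∑ j ∈ range (n + 1), Pb n p j = 1 := binom_sum_one p (1-p) hpq n
  have hvar : ∑ j ∈ range (n + 1), ((j:ℝ) - μ) ^ 2 * Pb n p j = μ * (1 - p) :=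
    binom_var n p (1-p) hpq
  set W : Finset ℕ := (range (n + 1)).filter (fun j => ((j:ℝ) - μ) ^ 2 ≤ (1.3 * s) ^ 2) with hWdef
  have hWsub : W ⊆ range (n + 1) := filter_subset _ _
  have hWsum : (2/5 : ℝ) ≤ ∑ j ∈ W, Pb n p j := by
    have hsdiff := Finset.sum_sdiff (f := Pb n p) hWsub
    have hout : ∑ j ∈ (range (n+1)) \ W, Pb n p j ≤ 100/169 := by
      have hstep : ∀ j ∈ (range (n+1)) \ W, Pb n p j ≤ ((j:ℝ) - μ)^2 * Pb n p j / (1.69 * μ) := by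
        intro j hj
        rw [Finset.mem_sdiff, hWdef, Finset.mem_filter] at hj
        have hj2 : (1.3*s)^2 < ((j:ℝ) - μ)^2 := by
          rcases hj with ⟨hj1, hj2⟩
          by_contra hc; push_neg at hc; exact hj2 ⟨hj1, hc⟩
        have h169 : (1.3*s)^2 = 1.69*μ := by rw [mul_pow, hs2]; norm_num
        rw [le_div_iff₀ (by positivity)]
        nlinarith [hP0 j]
      calc ∑ j ∈ (range (n+1)) \ W, Pb n p j
          ≤ ∑ j ∈ (range (n+1)) \ W, ((j:ℝ) - μ)^2 * Pb n p j / (1.69*μ) :=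
            Finset.sum_le_sum hstep
        _ ≤ ∑ j ∈ range (n+1), ((j:ℝ) - μ)^2 * Pb n p j / (1.69*μ) :=
            Finset.sum_le_sum_of_subset_of_nonneg (Finset.sdiff_subset)
              (fun j _ _ => div_nonneg (mul_nonneg (sq_nonneg _) (hP0 j)) (by positivity))
        _ = (μ * (1-p)) / (1.69*μ) := by rw [← Finset.sum_div, hvar]
        _ ≤ 100/169 := by rw [div_le_iff₀ (by positivity)]; nlinarith
    linarith
  have hWne : W.Nonempty := by
    rcases Finset.eq_empty_or_nonempty W with h | h
    · exfalso; rw [h, Finset.sum_empty] at hWsum; norm_num at hWsum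
    · exact h
  have hcardpos : 0 < (W.card : ℝ) := by exact_mod_cast Finset.card_pos.mpr hWne
  have hex : ∃ j ∈ W, (2/5 : ℝ) / W.card ≤ Pb n p j := by
    by_contra hno
    push_neg at hno
    have hlt := Finset.sum_lt_sum_of_nonempty hWne hno
    rw [Finset.sum_const, nsmul_eq_mul, mul_div_cancel₀ _ (ne_of_gt hcardpos)] at hlt
    linarith
  obtain ⟨m, hmW, hm2⟩ := hex
  have hcard : (W.card : ℝ) ≤ 2.6 * s + 1 := by
    have hsub : W ⊆ Finset.Icc ⌈μ - 1.3*s⌉₊ ⌊μ + 1.3*s⌋₊ := by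
      intro j hj
      rw [hWdef, Finset.mem_filter] at hj
      have h13 : (0:ℝ) ≤ 1.3*s := by positivity
      have hub : (j:ℝ) ≤ μ + 1.3*s := by nlinarith [hj.2]
      have hlb : μ - 1.3*s ≤ (j:ℝ) := by nlinarith [hj.2]
      rw [Finset.mem_Icc]
      exact ⟨Nat.ceil_le.mpr hlb, Nat.le_floor hub⟩
    have h1 := Finset.card_le_card hsub
    rw [Nat.card_Icc] at h1
    have hA := Nat.le_ceil (μ - 1.3*s)
    have hB := Nat.floor_le (show (0:ℝ) ≤ μ + 1.3*s by positivity)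
    rcases le_or_gt (⌈μ - 1.3*s⌉₊) (⌊μ + 1.3*s⌋₊ + 1) with h | h
    · have h2 : (W.card : ℝ) ≤ ((⌊μ + 1.3*s⌋₊ + 1 - ⌈μ - 1.3*s⌉₊ : ℕ) : ℝ) := by
        exact_mod_cast h1
      rw [Nat.cast_sub h] at h2
      push_cast at h2
      linarith
    · have hz : ⌊μ + 1.3*s⌋₊ + 1 - ⌈μ - 1.3*s⌉₊ = 0 := by omega
      rw [hz, Nat.le_zero] at h1
      rw [h1]
      push_cast
      positivity
  have hPm : 1 / (8*s) ≤ Pb n p m := by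
    have h1 : (2/5 : ℝ) / (2.6*s+1) ≤ (2/5) / W.card :=
      div_le_div_of_nonneg_left (by norm_num) hcardpos hcard
    have h2 : 1/(8*s) ≤ (2/5 : ℝ)/(2.6*s+1) := by
      rw [div_le_div_iff₀ (by positivity) (by positivity)]
      nlinarith
    linarith
  have hmW' : ((m:ℝ) - μ)^2 ≤ (1.3*s)^2 := by
    rw [hWdef, Finset.mem_filter] at hmW
    exact hmW.2
  have hmub : (m:ℝ) ≤ μ + 1.3*s := by nlinarith [hmW', hs0]
  have hmlb : μ - 1.3*s ≤ (m:ℝ) := by nlinarith [hmW', hs0]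
  have hmub' : (m:ℝ) ≤ (1+δ)*μ := by nlinarith [hsδμ]
  have hmlb' : (1-δ)*μ ≤ (m:ℝ) := by nlinarith [hsδμ]
  have hmn : m ≤ n := by
    have hh := hWsub hmW
    rw [Finset.mem_range] at hh
    omega
  set E : ℝ := Real.exp (-(2 * (δ^2 * μ))) with hEdef
  have hE0 : 0 < E := Real.exp_pos _
  have hE : E ≤ 1/64 := by
    have h2e : (2:ℝ) ≤ Real.exp 1 := by linarith [Real.add_one_le_exp (1:ℝ)]
    have h6 : E ≤ Real.exp (-6) := by
      rw [hEdef]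
      exact Real.exp_le_exp.mpr (by linarith)
    have h64 : (64:ℝ) ≤ Real.exp 6 := by
      have he6 : Real.exp 6 = (Real.exp 1)^(6:ℕ) := by
        rw [← Real.exp_nat_mul]; norm_num
      rw [he6]
      calc (64:ℝ) = 2^(6:ℕ) := by norm_num
        _ ≤ (Real.exp 1)^(6:ℕ) := pow_le_pow_left₀ (by norm_num) h2e 6
    have h7 : Real.exp (-6 : ℝ) ≤ 1/64 := by
      rw [Real.exp_neg]
      rw [inv_le_comm₀ (Real.exp_pos 6) (by norm_num)]
      linarith
    linarith
  set L : ℝ := 1 + 8 * s * E with hLdef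
  have hL1 : 1 ≤ L := by
    rw [hLdef]
    linarith [mul_pos hs0 hE0]
  have hLδμ : L ≤ 0.241 * (δ * μ) := by
    have h8 : 8 * s * E ≤ 8 * s * (1/64) := by
      apply mul_le_mul_of_nonneg_left hE (by positivity)
    rw [hLdef]
    linarith
  set K : ℝ := 2 / (1 - 1.4 * δ) with hKdef
  have h14 : (0.3:ℝ) ≤ 1 - 1.4*δ := by linarith
  have hK0 : 0 < K := by rw [hKdef]; positivity
  have hK20 : K ≤ 20/3 := by
    rw [hKdef, div_le_iff₀ (by linarith)]
    linarith
  have hKinv : ∀ x : ℝ, x ≤ (1 + 1.4*δ)*μ → μ ≤ K * (μ - x * p) := by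
    intro x hx
    rw [hKdef]
    exact aux_Kinv δ μ p x hδ0 hδ1 hp0 hp1 hμ0 hx
  have ratio : ∀ k : ℕ, k + 1 ≤ n →
      Pb n p (k+1) * (((k:ℝ) + 1) * (1 - p)) = Pb n p k * (((n:ℝ) - (k:ℝ)) * p) := by
    intro k hk
    have hc : n.choose (k+1) * (k+1) = n.choose k * (n - k) := Nat.choose_succ_right_eq n k
    have hc' : (n.choose (k+1) : ℝ) * ((k:ℝ) + 1) = (n.choose k : ℝ) * ((n:ℝ) - (k:ℝ)) := by
      have h := congrArg (fun t : ℕ => (t:ℝ)) hc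
      push_cast [Nat.cast_sub (show k ≤ n by omega)] at h
      linarith [h]
    unfold Pb
    have he : n - k = (n - (k+1)) + 1 := by omega
    rw [he, pow_succ, pow_succ]
    linear_combination (p ^ k * p * (1-p) ^ (n - (k+1)) * (1-p)) * hc'
  have up_step : ∀ k : ℕ, ((k:ℝ) + 1) ≤ (1 + 1.4*δ)*μ →
      Pb n p k * Real.exp (-(K/μ) * max (((k:ℝ)+1) - μ) 0) ≤ Pb n p (k+1) := by
    intro k hk
    have hδμhalf : δ * μ ≤ 1/2 * μ := mul_le_mul_of_nonneg_right hδ1 hμ0.le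
    have hkn : k + 1 ≤ n := by
      have h2 : ((k:ℝ)+1) ≤ (n:ℝ) := by linarith [hnp, hn2]
      exact_mod_cast h2
    have hr := ratio k hkn
    have hkq : 0 < ((k:ℝ)+1) * (1-p) := by positivity
    rcases le_or_gt ((k:ℝ)+1) μ with hle | hlt
    · rw [max_eq_right (by linarith), mul_zero, Real.exp_zero, mul_one]
      have hineq : ((k:ℝ)+1)*(1-p) ≤ ((n:ℝ) - (k:ℝ))*p := by
        have : ((n:ℝ) - (k:ℝ))*p - ((k:ℝ)+1)*(1-p) = μ - ((k:ℝ)+1) + p := by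
          rw [← hnp]; ring
        linarith
      have h2 : Pb n p k * (((k:ℝ)+1)*(1-p)) ≤ Pb n p (k+1) * (((k:ℝ)+1)*(1-p)) := by
        calc Pb n p k * (((k:ℝ)+1)*(1-p)) ≤ Pb n p k * (((n:ℝ)-(k:ℝ))*p) :=
              mul_le_mul_of_nonneg_left hineq (hP0 k)
          _ = Pb n p (k+1) * (((k:ℝ)+1)*(1-p)) := hr.symm
      exact le_of_mul_le_mul_right h2 hkq
    · rw [max_eq_left (by linarith)]
      set y : ℝ := K/μ * (((k:ℝ)+1) - μ) with hydef
      have hyμ : y * μ = K * (((k:ℝ)+1) - μ) := by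
        rw [hydef]; field_simp
      have hy0 : 0 ≤ y := by
        rw [hydef]
        exact mul_nonneg (div_nonneg hK0.le hμ0.le) (by linarith)
      have hKc : μ ≤ K * (μ - ((k:ℝ)+1)*p) := hKinv _ hk
      have hkey : ((k:ℝ)+1)*(1-p) ≤ (1+y) * (((n:ℝ)-(k:ℝ))*p) :=
        aux_up p δ μ ((n:ℝ)) ((k:ℝ)) K y hp0 hp1 hδ0 hδ1 hμ0 hnp hk hlt hKc hK0 hyμ
      have h2 : Pb n p k * (((k:ℝ)+1)*(1-p)) ≤ ((1+y) * Pb n p (k+1)) * (((k:ℝ)+1)*(1-p)) := by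
        calc Pb n p k * (((k:ℝ)+1)*(1-p)) ≤ Pb n p k * ((1+y) * (((n:ℝ)-(k:ℝ))*p)) :=
              mul_le_mul_of_nonneg_left hkey (hP0 k)
          _ = (1+y) * (Pb n p k * (((n:ℝ)-(k:ℝ))*p)) := by ring
          _ = (1+y) * (Pb n p (k+1) * (((k:ℝ)+1)*(1-p))) := by rw [hr]
          _ = ((1+y) * Pb n p (k+1)) * (((k:ℝ)+1)*(1-p)) := by ring
      have h3 : Pb n p k ≤ (1+y) * Pb n p (k+1) := le_of_mul_le_mul_right h2 hkq
      have h4 : (1+y) * Real.exp (-y) ≤ 1 := aux_exp y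
      have harg : -(K/μ) * (((k:ℝ)+1) - μ) = -y := by rw [hydef]; ring
      rw [harg]
      calc Pb n p k * Real.exp (-y) ≤ ((1+y) * Pb n p (k+1)) * Real.exp (-y) :=
            mul_le_mul_of_nonneg_right h3 (Real.exp_nonneg _)
        _ = Pb n p (k+1) * ((1+y) * Real.exp (-y)) := by ring
        _ ≤ Pb n p (k+1) * 1 := mul_le_mul_of_nonneg_left h4 (hP0 _)
        _ = Pb n p (k+1) := mul_one _
  have down_step : ∀ k : ℕ, k + 1 ≤ n → μ ≤ 3*((k:ℝ)+1) →
      Pb n p (k+1) * Real.exp (-(6/μ) * max (μ - (k:ℝ)) 0) ≤ Pb n p k := by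
    intro k hkn hk3
    have hr := ratio k hkn
    have hnk1 : (1:ℝ) ≤ (n:ℝ) - (k:ℝ) := by
      have : ((k:ℝ)+1) ≤ (n:ℝ) := by exact_mod_cast hkn
      linarith
    have hnkp : 0 < ((n:ℝ) - (k:ℝ))*p := mul_pos (by linarith) hp0
    rcases le_or_gt μ (k:ℝ) with hle | hlt
    · rw [max_eq_right (by linarith), mul_zero, Real.exp_zero, mul_one]
      have hineq : ((n:ℝ) - (k:ℝ))*p ≤ ((k:ℝ)+1)*(1-p) := by
        have hexp : ((k:ℝ)+1)*(1-p) - ((n:ℝ) - (k:ℝ))*p = ((k:ℝ)+1) - p - μ := by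
          rw [← hnp]; ring
        linarith
      have h2 : Pb n p (k+1) * (((k:ℝ)+1)*(1-p)) ≤ Pb n p k * (((k:ℝ)+1)*(1-p)) := by
        rw [hr]
        exact mul_le_mul_of_nonneg_left hineq (hP0 k)
      exact le_of_mul_le_mul_right h2 (by positivity)
    · rw [max_eq_left (by linarith)]
      set y : ℝ := 6/μ * (μ - (k:ℝ)) with hydef
      have hyμ : y * μ = 6 * (μ - (k:ℝ)) := by
        rw [hydef]; field_simp
      have hy0 : 0 ≤ y := by
        rw [hydef]
        exact mul_nonneg (by positivity) (by linarith)
      have hkey : ((n:ℝ)-(k:ℝ))*p ≤ (1+y) * (((k:ℝ)+1)*(1-p)) :=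
        aux_down p μ ((n:ℝ)) ((k:ℝ)) y hp0 hp1 hμ0 hnp hk3 hlt hyμ
      have h2 : Pb n p (k+1) * (((n:ℝ)-(k:ℝ))*p) ≤ ((1+y) * Pb n p k) * (((n:ℝ)-(k:ℝ))*p) := by
        calc Pb n p (k+1) * (((n:ℝ)-(k:ℝ))*p)
            ≤ Pb n p (k+1) * ((1+y) * (((k:ℝ)+1)*(1-p))) :=
              mul_le_mul_of_nonneg_left hkey (hP0 _)
          _ = (1+y) * (Pb n p (k+1) * (((k:ℝ)+1)*(1-p))) := by ring
          _ = (1+y) * (Pb n p k * (((n:ℝ)-(k:ℝ))*p)) := by rw [hr]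
          _ = ((1+y) * Pb n p k) * (((n:ℝ)-(k:ℝ))*p) := by ring
      have h3 : Pb n p (k+1) ≤ (1+y) * Pb n p k := le_of_mul_le_mul_right h2 hnkp
      have h4 : (1+y) * Real.exp (-y) ≤ 1 := aux_exp y
      have harg : -(6/μ) * (μ - (k:ℝ)) = -y := by rw [hydef]; ring
      rw [harg]
      calc Pb n p (k+1) * Real.exp (-y) ≤ ((1+y) * Pb n p k) * Real.exp (-y) :=
            mul_le_mul_of_nonneg_right h3 (Real.exp_nonneg _)
        _ = Pb n p k * ((1+y) * Real.exp (-y)) := by ring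
        _ ≤ Pb n p k * 1 := mul_le_mul_of_nonneg_left h4 (hP0 _)
        _ = Pb n p k := mul_one _
  have walk_up : ∀ j : ℕ, m ≤ j → ((j:ℝ)) ≤ (1+1.4*δ)*μ →
      Pb n p m * Real.exp (-(K/μ) * (((max ((j:ℝ) - μ) 0 + 1)^2 - 1)/2)) ≤ Pb n p j := by
    intro j hmj
    induction j, hmj using Nat.le_induction with
    | base =>
      intro _
      have hF0 : 0 ≤ ((max ((m:ℝ) - μ) 0 + 1)^2 - 1)/2 := aux_sq_nonneg _
      have he1 : Real.exp (-(K/μ) * (((max ((m:ℝ) - μ) 0 + 1)^2 - 1)/2)) ≤ 1 := by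
        rw [Real.exp_le_one_iff]
        have : 0 ≤ (K/μ) * (((max ((m:ℝ) - μ) 0 + 1)^2 - 1)/2) :=
          mul_nonneg (div_nonneg hK0.le hμ0.le) hF0
        linarith
      calc Pb n p m * Real.exp (-(K/μ) * (((max ((m:ℝ) - μ) 0 + 1)^2 - 1)/2))
          ≤ Pb n p m * 1 := mul_le_mul_of_nonneg_left he1 (hP0 m)
        _ = Pb n p m := mul_one _
    | succ j hmj ih =>
      intro hj1
      push_cast at hj1
      have hj0 : (j:ℝ) ≤ (1+1.4*δ)*μ := by linarith
      have h1 := ih hj0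
      have hstep := up_step j (by linarith)
      have hFs : ((max ((j:ℝ) - μ) 0 + 1)^2 - 1)/2 + max (((j:ℝ)+1) - μ) 0
          ≤ ((max (((j:ℝ)+1) - μ) 0 + 1)^2 - 1)/2 := by
        have hss := step_sq (((j:ℝ)+1) - μ)
        rw [show ((j:ℝ)+1) - μ - 1 = (j:ℝ) - μ from by ring] at hss
        linarith
      have hmono : -(K/μ) * (((max (((j:ℝ)+1) - μ) 0 + 1)^2 - 1)/2)
          ≤ -(K/μ) * (((max ((j:ℝ) - μ) 0 + 1)^2 - 1)/2) + -(K/μ) * max (((j:ℝ)+1) - μ) 0 := by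
        have hKμ : 0 ≤ K/μ := div_nonneg hK0.le hμ0.le
        have h9 := mul_le_mul_of_nonneg_left hFs hKμ
        linarith [h9]
      have hcast : ((j+1:ℕ):ℝ) = (j:ℝ)+1 := by push_cast; ring
      rw [hcast]
      calc Pb n p m * Real.exp (-(K/μ) * (((max (((j:ℝ)+1) - μ) 0 + 1)^2 - 1)/2))
          ≤ Pb n p m * (Real.exp (-(K/μ) * (((max ((j:ℝ) - μ) 0 + 1)^2 - 1)/2))
              * Real.exp (-(K/μ) * max (((j:ℝ)+1) - μ) 0)) := by
            rw [← Real.exp_add]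
            exact mul_le_mul_of_nonneg_left (Real.exp_le_exp.mpr hmono) (hP0 m)
        _ = (Pb n p m * Real.exp (-(K/μ) * (((max ((j:ℝ) - μ) 0 + 1)^2 - 1)/2)))
              * Real.exp (-(K/μ) * max (((j:ℝ)+1) - μ) 0) := by ring
        _ ≤ Pb n p j * Real.exp (-(K/μ) * max (((j:ℝ)+1) - μ) 0) :=
            mul_le_mul_of_nonneg_right h1 (Real.exp_nonneg _)
        _ ≤ Pb n p (j+1) := hstep
  have walk_down : ∀ d : ℕ, ∀ j : ℕ, j + d = m → μ ≤ 3*((j:ℝ)+1) →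
      Pb n p m * Real.exp (-(6/μ) * (((max (μ - (j:ℝ)) 0 + 1)^2 - 1)/2)) ≤ Pb n p j := by
    intro d
    induction d with
    | zero =>
      intro j hj _
      obtain rfl : j = m := by omega
      have hF0 : 0 ≤ ((max (μ - (j:ℝ)) 0 + 1)^2 - 1)/2 := aux_sq_nonneg _
      have he1 : Real.exp (-(6/μ) * (((max (μ - (j:ℝ)) 0 + 1)^2 - 1)/2)) ≤ 1 := by
        rw [Real.exp_le_one_iff]
        have h66 : (0:ℝ) ≤ 6/μ := by positivity
        have := mul_nonneg h66 hF0
        linarith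
      calc Pb n p j * Real.exp (-(6/μ) * (((max (μ - (j:ℝ)) 0 + 1)^2 - 1)/2))
          ≤ Pb n p j * 1 := mul_le_mul_of_nonneg_left he1 (hP0 j)
        _ = Pb n p j := mul_one _
    | succ d ih =>
      intro j hj hj3
      have hj1 : (j+1) + d = m := by omega
      have hj3' : μ ≤ 3*(((j+1:ℕ):ℝ)+1) := by push_cast; linarith
      have h1 := ih (j+1) hj1 hj3'
      have hjn : j + 1 ≤ n := by omega
      have hstep := down_step j hjn hj3
      have hFs : ((max (μ - ((j:ℝ)+1)) 0 + 1)^2 - 1)/2 + max (μ - (j:ℝ)) 0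
          ≤ ((max (μ - (j:ℝ)) 0 + 1)^2 - 1)/2 := by
        have hss := step_sq (μ - (j:ℝ))
        rw [show μ - (j:ℝ) - 1 = μ - ((j:ℝ)+1) from by ring] at hss
        linarith
      have hmono : -(6/μ) * (((max (μ - (j:ℝ)) 0 + 1)^2 - 1)/2)
          ≤ -(6/μ) * (((max (μ - ((j:ℝ)+1)) 0 + 1)^2 - 1)/2) + -(6/μ) * max (μ - (j:ℝ)) 0 := by
        have hKμ : (0:ℝ) ≤ 6/μ := by positivity
        have h9 := mul_le_mul_of_nonneg_left hFs hKμ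
        linarith [h9]
      have hcast : ((j+1:ℕ):ℝ) = (j:ℝ)+1 := by push_cast; ring
      rw [hcast] at h1
      calc Pb n p m * Real.exp (-(6/μ) * (((max (μ - (j:ℝ)) 0 + 1)^2 - 1)/2))
          ≤ Pb n p m * (Real.exp (-(6/μ) * (((max (μ - ((j:ℝ)+1)) 0 + 1)^2 - 1)/2))
              * Real.exp (-(6/μ) * max (μ - (j:ℝ)) 0)) := by
            rw [← Real.exp_add]
            exact mul_le_mul_of_nonneg_left (Real.exp_le_exp.mpr hmono) (hP0 m)
        _ = (Pb n p m * Real.exp (-(6/μ) * (((max (μ - ((j:ℝ)+1)) 0 + 1)^2 - 1)/2)))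
              * Real.exp (-(6/μ) * max (μ - (j:ℝ)) 0) := by ring
        _ ≤ Pb n p (j+1) * Real.exp (-(6/μ) * max (μ - (j:ℝ)) 0) :=
            mul_le_mul_of_nonneg_right h1 (Real.exp_nonneg _)
        _ ≤ Pb n p j := hstep
  have hδμhalf : δ * μ ≤ 1/2 * μ := mul_le_mul_of_nonneg_right hδ1 hμ0.le
  constructor
  · -- upper tail
    rw [ge_iff_le]
    set T : ℝ := max ((1+δ)*μ) ((m:ℝ)) with hTdef
    have hT0 : (0:ℝ) ≤ T := le_trans (by linarith) (le_max_left _ _)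
    have hTub : T ≤ (1+δ)*μ := max_le (le_refl _) hmub'
    have hTt : (1+δ)*μ ≤ T := le_max_left _ _
    have hTm : (m:ℝ) ≤ T := le_max_right _ _
    set a : ℕ := ⌈T⌉₊ with hadef
    set b : ℕ := ⌊T + L⌋₊ with hbdef
    have haR : T ≤ (a:ℝ) := Nat.le_ceil T
    have haR' : (a:ℝ) < T + 1 := Nat.ceil_lt_add_one hT0
    have hbR : (b:ℝ) ≤ T + L := Nat.floor_le (by linarith)
    have hbR' : T + L - 1 < (b:ℝ) := by
      have := Nat.lt_floor_add_one (T + L)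
      linarith
    have hab : a ≤ b := by
      rw [hadef]
      apply Nat.ceil_le.mpr
      linarith
    have hbμ : (b:ℝ) ≤ (1+1.4*δ)*μ := by linarith
    have hbn : b ≤ n := by
      have h1 : (b:ℝ) ≤ (n:ℝ) := by linarith [hnp, hn2]
      exact_mod_cast h1
    have hsubset : Finset.Icc a b ⊆ range (n+1) := by
      intro j hj
      rw [Finset.mem_Icc] at hj
      rw [Finset.mem_range]
      omega
    have hcards : 8*s*E ≤ ((Finset.Icc a b).card : ℝ) := by
      rw [Nat.card_Icc]
      have hcc : ((b + 1 - a : ℕ):ℝ) = (b:ℝ) + 1 - a := by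
        rw [Nat.cast_sub (by omega)]
        push_cast
        ring
      rw [hcc, hLdef] at *
      linarith
    set c : ℝ := Real.exp (-(7*(δ^2*μ))) * (1/(8*s)) with hcdef
    have h8s : (0:ℝ) < 8*s := by linarith
    have hc0 : 0 ≤ c := by
      rw [hcdef]
      exact mul_nonneg (Real.exp_nonneg _) (le_of_lt (one_div_pos.mpr h8s))
    have hx1 : max ((b:ℝ) - μ) 0 + 1 ≤ 1.41*(δ*μ) := by
      have hxb : max ((b:ℝ)-μ) 0 ≤ δ*μ + L := max_le (by linarith) (by linarith)
      linarith
    have hcost : (K/μ) * (((max ((b:ℝ) - μ) 0 + 1)^2 - 1)/2) ≤ 7*(δ^2*μ) :=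
      aux_cost δ μ K ((b:ℝ) - μ) hδ0 hμ0 hK0 hK20 hx1
    have hpoint : ∀ j ∈ Finset.Icc a b, c ≤ Pb n p j := by
      intro j hj
      rw [Finset.mem_Icc] at hj
      have hja : (a:ℝ) ≤ (j:ℝ) := by exact_mod_cast hj.1
      have hjb : (j:ℝ) ≤ (b:ℝ) := by exact_mod_cast hj.2
      have hjm : m ≤ j := by
        have h1 : (m:ℝ) ≤ (j:ℝ) := by linarith
        exact_mod_cast h1
      have hw := walk_up j hjm (by linarith)
      have hFjb := aux_sq_mono ((j:ℝ) - μ) ((b:ℝ) - μ) (by linarith)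
      have hKμ : (0:ℝ) ≤ K/μ := div_nonneg hK0.le hμ0.le
      have h5 : (K/μ) * (((max ((j:ℝ) - μ) 0 + 1)^2 - 1)/2)
          ≤ (K/μ) * (((max ((b:ℝ) - μ) 0 + 1)^2 - 1)/2) :=
        mul_le_mul_of_nonneg_left hFjb hKμ
      have h6 : Real.exp (-(7*(δ^2*μ)))
          ≤ Real.exp (-(K/μ) * (((max ((j:ℝ) - μ) 0 + 1)^2 - 1)/2)) := by
        apply Real.exp_le_exp.mpr
        linarith [h5, hcost]
      calc c ≤ Real.exp (-(K/μ) * (((max ((j:ℝ) - μ) 0 + 1)^2 - 1)/2)) * Pb n p m := by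
            rw [hcdef]
            exact mul_le_mul h6 hPm (le_of_lt (one_div_pos.mpr h8s)) (Real.exp_nonneg _)
        _ = Pb n p m * Real.exp (-(K/μ) * (((max ((j:ℝ) - μ) 0 + 1)^2 - 1)/2)) := mul_comm _ _
        _ ≤ Pb n p j := hw
    have hsum_lb : ((Finset.Icc a b).card : ℝ) * c ≤ ∑ j ∈ Finset.Icc a b, Pb n p j := by
      have := Finset.card_nsmul_le_sum (Finset.Icc a b) (Pb n p) c hpoint
      rwa [nsmul_eq_mul] at this
    have htail : ∑ j ∈ Finset.Icc a b, Pb n p j ≤ binomTailGE n p ((1+δ)*μ) := by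
      have hunfold : binomTailGE n p ((1+δ)*μ)
          = ∑ j ∈ range (n+1), if (1+δ)*μ ≤ (j:ℝ) then Pb n p j else 0 := rfl
      rw [hunfold]
      have heq : ∑ j ∈ Finset.Icc a b, Pb n p j
          = ∑ j ∈ Finset.Icc a b, (if (1+δ)*μ ≤ (j:ℝ) then Pb n p j else 0) := by
        apply Finset.sum_congr rfl
        intro j hj
        rw [Finset.mem_Icc] at hj
        have hja : (a:ℝ) ≤ (j:ℝ) := by exact_mod_cast hj.1
        rw [if_pos (by linarith)]
      rw [heq]
      apply Finset.sum_le_sum_of_subset_of_nonneg hsubset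
      intro j _ _
      by_cases h : (1+δ)*μ ≤ (j:ℝ)
      · rw [if_pos h]; exact hP0 j
      · rw [if_neg h]
    have hfinal : Real.exp (-9*δ^2*μ) = (8*s*E) * c := by
      rw [hcdef, hEdef]
      rw [show (8*s) * Real.exp (-(2*(δ^2*μ))) * (Real.exp (-(7*(δ^2*μ))) * (1/(8*s)))
          = (8*s) * (1/(8*s)) * (Real.exp (-(2*(δ^2*μ))) * Real.exp (-(7*(δ^2*μ)))) from by ring]
      rw [mul_one_div, div_self (ne_of_gt h8s), one_mul, ← Real.exp_add]
      congr 1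
      ring
    have h9 : (8*s*E) * c ≤ ((Finset.Icc a b).card : ℝ) * c :=
      mul_le_mul_of_nonneg_right hcards hc0
    calc Real.exp (-9*δ^2*μ) = (8*s*E) * c := hfinal
      _ ≤ ((Finset.Icc a b).card : ℝ) * c := h9
      _ ≤ ∑ j ∈ Finset.Icc a b, Pb n p j := hsum_lb
      _ ≤ binomTailGE n p ((1+δ)*μ) := htail
  · -- lower tail
    rw [ge_iff_le]
    set T : ℝ := min ((1-δ)*μ) ((m:ℝ)) with hTdef
    have hTlb : (1-δ)*μ ≤ T := le_min (le_refl _) hmlb'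
    have hTub : T ≤ (1-δ)*μ := min_le_left _ _
    have hTm : T ≤ (m:ℝ) := min_le_right _ _
    have hT0 : (0:ℝ) < T := by linarith
    have hTL0 : (0:ℝ) ≤ T - L := by linarith
    set a : ℕ := ⌈T - L⌉₊ with hadef
    set b : ℕ := ⌊T⌋₊ with hbdef
    have haR : T - L ≤ (a:ℝ) := Nat.le_ceil _
    have haR' : (a:ℝ) < T - L + 1 := Nat.ceil_lt_add_one hTL0
    have hbR : (b:ℝ) ≤ T := Nat.floor_le hT0.le
    have hbR' : T - 1 < (b:ℝ) := by
      have := Nat.lt_floor_add_one T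
      linarith
    have hab : a ≤ b := by
      rw [hadef]
      apply Nat.ceil_le.mpr
      linarith
    have hbn : b ≤ n := by
      have h1 : (b:ℝ) ≤ (n:ℝ) := by linarith [hnp, hn2]
      exact_mod_cast h1
    have hsubset : Finset.Icc a b ⊆ range (n+1) := by
      intro j hj
      rw [Finset.mem_Icc] at hj
      rw [Finset.mem_range]
      omega
    have ha3 : μ ≤ 3*((a:ℝ)+1) := by linarith
    have hcards : 8*s*E ≤ ((Finset.Icc a b).card : ℝ) := by
      rw [Nat.card_Icc]
      have hcc : ((b + 1 - a : ℕ):ℝ) = (b:ℝ) + 1 - a := by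
        rw [Nat.cast_sub (by omega)]
        push_cast
        ring
      rw [hcc, hLdef] at *
      linarith
    set c : ℝ := Real.exp (-(7*(δ^2*μ))) * (1/(8*s)) with hcdef
    have h8s : (0:ℝ) < 8*s := by linarith
    have hc0 : 0 ≤ c := by
      rw [hcdef]
      exact mul_nonneg (Real.exp_nonneg _) (le_of_lt (one_div_pos.mpr h8s))
    have hx1 : max (μ - (a:ℝ)) 0 + 1 ≤ 1.41*(δ*μ) := by
      have hxb : max (μ - (a:ℝ)) 0 ≤ δ*μ + L := max_le (by linarith) (by linarith)
      linarith
    have hcost : ((6:ℝ)/μ) * (((max (μ - (a:ℝ)) 0 + 1)^2 - 1)/2) ≤ 7*(δ^2*μ) :=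
      aux_cost δ μ 6 (μ - (a:ℝ)) hδ0 hμ0 (by norm_num) (by norm_num) hx1
    have hpoint : ∀ j ∈ Finset.Icc a b, c ≤ Pb n p j := by
      intro j hj
      rw [Finset.mem_Icc] at hj
      have hja : (a:ℝ) ≤ (j:ℝ) := by exact_mod_cast hj.1
      have hjb : (j:ℝ) ≤ (b:ℝ) := by exact_mod_cast hj.2
      have hjm : j ≤ m := by
        have h1 : (j:ℝ) ≤ (m:ℝ) := by linarith
        exact_mod_cast h1
      have hw := walk_down (m - j) j (by omega) (by linarith)
      have hFja := aux_sq_mono (μ - (j:ℝ)) (μ - (a:ℝ)) (by linarith)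
      have hKμ : (0:ℝ) ≤ 6/μ := by positivity
      have h5 : ((6:ℝ)/μ) * (((max (μ - (j:ℝ)) 0 + 1)^2 - 1)/2)
          ≤ ((6:ℝ)/μ) * (((max (μ - (a:ℝ)) 0 + 1)^2 - 1)/2) :=
        mul_le_mul_of_nonneg_left hFja hKμ
      have h6 : Real.exp (-(7*(δ^2*μ)))
          ≤ Real.exp (-(6/μ) * (((max (μ - (j:ℝ)) 0 + 1)^2 - 1)/2)) := by
        apply Real.exp_le_exp.mpr
        linarith [h5, hcost]
      calc c ≤ Real.exp (-(6/μ) * (((max (μ - (j:ℝ)) 0 + 1)^2 - 1)/2)) * Pb n p m := by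
            rw [hcdef]
            exact mul_le_mul h6 hPm (le_of_lt (one_div_pos.mpr h8s)) (Real.exp_nonneg _)
        _ = Pb n p m * Real.exp (-(6/μ) * (((max (μ - (j:ℝ)) 0 + 1)^2 - 1)/2)) := mul_comm _ _
        _ ≤ Pb n p j := hw
    have hsum_lb : ((Finset.Icc a b).card : ℝ) * c ≤ ∑ j ∈ Finset.Icc a b, Pb n p j := by
      have := Finset.card_nsmul_le_sum (Finset.Icc a b) (Pb n p) c hpoint
      rwa [nsmul_eq_mul] at this
    have htail : ∑ j ∈ Finset.Icc a b, Pb n p j ≤ binomTailLE n p ((1-δ)*μ) := by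
      have hunfold : binomTailLE n p ((1-δ)*μ)
          = ∑ j ∈ range (n+1), if (j:ℝ) ≤ (1-δ)*μ then Pb n p j else 0 := rfl
      rw [hunfold]
      have heq : ∑ j ∈ Finset.Icc a b, Pb n p j
          = ∑ j ∈ Finset.Icc a b, (if (j:ℝ) ≤ (1-δ)*μ then Pb n p j else 0) := by
        apply Finset.sum_congr rfl
        intro j hj
        rw [Finset.mem_Icc] at hj
        have hjb : (j:ℝ) ≤ (b:ℝ) := by exact_mod_cast hj.2
        rw [if_pos (by linarith)]
      rw [heq]
      apply Finset.sum_le_sum_of_subset_of_nonneg hsubset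
      intro j _ _
      by_cases h : (j:ℝ) ≤ (1-δ)*μ
      · rw [if_pos h]; exact hP0 j
      · rw [if_neg h]
    have hfinal : Real.exp (-9*δ^2*μ) = (8*s*E) * c := by
      rw [hcdef, hEdef]
      rw [show (8*s) * Real.exp (-(2*(δ^2*μ))) * (Real.exp (-(7*(δ^2*μ))) * (1/(8*s)))
          = (8*s) * (1/(8*s)) * (Real.exp (-(2*(δ^2*μ))) * Real.exp (-(7*(δ^2*μ)))) from by ring]
      rw [mul_one_div, div_self (ne_of_gt h8s), one_mul, ← Real.exp_add]
      congr 1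
      ring
    have h9 : (8*s*E) * c ≤ ((Finset.Icc a b).card : ℝ) * c :=
      mul_le_mul_of_nonneg_right hcards hc0
    calc Real.exp (-9*δ^2*μ) = (8*s*E) * c := hfinal
      _ ≤ ((Finset.Icc a b).card : ℝ) * c := h9
      _ ≤ ∑ j ∈ Finset.Icc a b, Pb n p j := hsum_lb
      _ ≤ binomTailLE n p ((1-δ)*μ) := htail
end

section
/- Let X ~ Bin(n,p) with μ = np. If p > 1/n, then Pr[X ≥ μ] > 1/4. -/
/-!
Let `⌈np⌉ = m + 1`, so `1 ≤ m < np`. The tail `T_n(q) = P[Bin(n, q) > m]` is a sum of Bernstein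
polynomials `b_{n,ν}` whose derivative telescopes to `n b_{n-1,m}(q) > 0`, so `T_n(p) > T_n(m/n)`.
The value `T_n(m/n)` does not decrease with `n`: the polynomial
`F(q) = (m - nq) b_{n,m}(q) + T_n(q)` equals `T_n(m/n)` at `q = m/n` and `T_{n+1}(m/(n+1))` at
`q = m/(n+1)`, and its derivative `n (m - (n+1)q)(b_{n-1,m-1}(q) - b_{n-1,m}(q))` is `≤ 0` in
between, since `b_{n-1,ν+1}(q) ≤ b_{n-1,ν}(q)` when `nq ≤ ν + 1`. Hence
`T_n(m/n) ≥ T_{m+1}(m/(m+1)) = (m/(m+1))^(m+1)`, which increases with `m` (Bernoulli's inequality)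
and is `1/4` at `m = 1`.
-/

open Finset Polynomial

namespace bernsteinPolynomial

variable {R : Type*} [CommRing R]

theorem succ_succ (n ν : ℕ) :
    bernsteinPolynomial R (n + 1) (ν + 1) =
      X * bernsteinPolynomial R n ν + (1 - X) * bernsteinPolynomial R n (ν + 1) := by
  rcases lt_or_ge ν n with hν | hν
  · simp only [bernsteinPolynomial, Nat.choose_succ_succ', Nat.cast_add, Nat.add_sub_add_right,
      show n - ν = n - (ν + 1) + 1 by omega]
    ring
  · simp only [bernsteinPolynomial, Nat.choose_eq_zero_of_lt (Nat.lt_succ_of_le hν),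
      Nat.choose_succ_succ', Nat.add_sub_add_right, add_zero, Nat.cast_zero]
    ring

theorem succ_mul_one_sub_X_mul (n ν : ℕ) :
    ((ν + 1 : ℕ) : R[X]) * (1 - X) * bernsteinPolynomial R n (ν + 1) =
      ((n - ν : ℕ) : R[X]) * X * bernsteinPolynomial R n ν := by
  have h := congrArg (Nat.cast : ℕ → R[X]) (Nat.choose_succ_right_eq n ν)
  push_cast at h
  rcases lt_or_ge ν n with hν | hν
  · have hpow : (1 - X : R[X]) ^ (n - ν) = (1 - X) ^ (n - (ν + 1)) * (1 - X) := by
      rw [← pow_succ]; congr 1; omega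
    rw [bernsteinPolynomial, bernsteinPolynomial, hpow]
    push_cast
    linear_combination ((1 - X) * X ^ (ν + 1) * (1 - X) ^ (n - (ν + 1))) * h
  · simp [bernsteinPolynomial, Nat.choose_eq_zero_of_lt (Nat.lt_succ_of_le hν),
      Nat.sub_eq_zero_of_le hν]

variable [LinearOrder R] [IsStrictOrderedRing R]

theorem eval_nonneg (n ν : ℕ) {x : R} (hx₀ : 0 ≤ x) (hx₁ : x ≤ 1) :
    0 ≤ (bernsteinPolynomial R n ν).eval x := by
  simp only [bernsteinPolynomial, eval_mul, eval_pow, eval_sub, eval_one, eval_X, eval_natCast]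
  have := sub_nonneg.2 hx₁
  positivity

theorem eval_pos {n ν : ℕ} (h : ν ≤ n) {x : R} (hx₀ : 0 < x) (hx₁ : x < 1) :
    0 < (bernsteinPolynomial R n ν).eval x := by
  simp only [bernsteinPolynomial, eval_mul, eval_pow, eval_sub, eval_one, eval_X, eval_natCast]
  have := sub_pos.2 hx₁
  have := Nat.choose_pos h
  positivity

theorem eval_succ_le_eval {n ν : ℕ} (hν : ν ≤ n) {x : R} (hx₀ : 0 ≤ x) (hx₁ : x < 1)
    (hx : (n + 1) * x ≤ ν + 1) :
    (bernsteinPolynomial R n (ν + 1)).eval x ≤ (bernsteinPolynomial R n ν).eval x := by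
  have hratio := congrArg (eval x) (succ_mul_one_sub_X_mul (R := R) n ν)
  simp only [eval_mul, eval_sub, eval_one, eval_X, eval_natCast, Nat.cast_sub hν] at hratio
  push_cast at hratio
  have hpos : 0 < ((ν : R) + 1) * (1 - x) := by have := sub_pos.2 hx₁; positivity
  refine le_of_mul_le_mul_left ?_ hpos
  rw [hratio]
  exact mul_le_mul_of_nonneg_right (by linarith) (eval_nonneg n ν hx₀ hx₁.le)

end bernsteinPolynomial

noncomputable def bernsteinTail (n k : ℕ) : ℝ[X] :=
  ∑ ν ∈ Ico k (n + 1), bernsteinPolynomial ℝ n ν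

theorem binomTailGE_eq_eval_bernsteinTail (n : ℕ) (p t : ℝ) :
    binomTailGE n p t = (bernsteinTail n ⌈t⌉₊).eval p := by
  have hIco : (range (n + 1)).filter (fun j : ℕ => t ≤ j) = Ico ⌈t⌉₊ (n + 1) := by
    ext j
    simp [Nat.ceil_le, and_comm]
  simp [binomTailGE, bernsteinTail, eval_finsetSum, bernsteinPolynomial, ← sum_filter, hIco]

theorem bernsteinTail_self (n : ℕ) : bernsteinTail n n = X ^ n := by
  simp [bernsteinTail, bernsteinPolynomial]

theorem bernsteinTail_succ_succ {n m : ℕ} (hmn : m ≤ n) :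
    bernsteinTail (n + 1) (m + 1) = X * bernsteinPolynomial ℝ n m + bernsteinTail n (m + 1) := by
  have hlow : ∑ ν ∈ Ico m (n + 1), bernsteinPolynomial ℝ n ν =
      bernsteinPolynomial ℝ n m + bernsteinTail n (m + 1) :=
    sum_eq_sum_Ico_succ_bot (by omega) _
  have hhigh : ∑ ν ∈ Ico m (n + 1), bernsteinPolynomial ℝ n (ν + 1) = bernsteinTail n (m + 1) := by
    rw [sum_Ico_add', sum_Ico_succ_top (by omega),
      bernsteinPolynomial.eq_zero_of_lt ℝ n.lt_succ_self, add_zero, bernsteinTail]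
  rw [bernsteinTail, ← sum_Ico_add']
  simp only [bernsteinPolynomial.succ_succ, sum_add_distrib, ← mul_sum, hlow, hhigh]
  ring

theorem derivative_bernsteinTail_succ {n k : ℕ} (hkn : k ≤ n) :
    derivative (bernsteinTail (n + 1) (k + 1)) = (n + 1) * bernsteinPolynomial ℝ n k := by
  have htel : ∑ ν ∈ Ico k (n + 1),
      (bernsteinPolynomial ℝ n ν - bernsteinPolynomial ℝ n (ν + 1)) =
        bernsteinPolynomial ℝ n k := by
    rw [← neg_inj, ← sum_neg_distrib]
    simp only [neg_sub]
    rw [sum_Ico_sub _ (by omega), bernsteinPolynomial.eq_zero_of_lt ℝ n.lt_succ_self, zero_sub]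
  rw [bernsteinTail, ← sum_Ico_add', derivative_sum]
  simp only [bernsteinPolynomial.derivative_succ_aux, ← mul_sum, htel]

theorem bernsteinTail_strictMonoOn {n k : ℕ} (hk : 0 < k) (hkn : k ≤ n) :
    StrictMonoOn (fun q => (bernsteinTail n k).eval q) (Set.Icc 0 1) := by
  obtain ⟨k, rfl⟩ : ∃ k', k = k' + 1 := ⟨k - 1, by omega⟩
  obtain ⟨n, rfl⟩ : ∃ n', n = n' + 1 := ⟨n - 1, by omega⟩
  refine strictMonoOn_of_deriv_pos (convex_Icc 0 1) (bernsteinTail _ _).continuousOn ?_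
  intro q hq
  rw [interior_Icc] at hq
  rw [Polynomial.deriv, derivative_bernsteinTail_succ (by omega), eval_mul]
  have := bernsteinPolynomial.eval_pos (R := ℝ) (by omega : k ≤ n) hq.1 hq.2
  simp only [eval_add, eval_natCast, eval_one]
  positivity

noncomputable def tailInterpolant (n m : ℕ) : ℝ[X] :=
  ((m : ℝ[X]) - (n : ℝ[X]) * X) * bernsteinPolynomial ℝ n m + bernsteinTail n (m + 1)

theorem eval_tailInterpolant_div_self {n m : ℕ} (hn : n ≠ 0) :
    (tailInterpolant n m).eval ((m : ℝ) / n) = (bernsteinTail n (m + 1)).eval ((m : ℝ) / n) := by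
  have : (m : ℝ) - n * (m / n) = 0 := by field_simp; ring
  simp [tailInterpolant, this]

theorem eval_tailInterpolant_div_succ {n m : ℕ} (hmn : m ≤ n) :
    (tailInterpolant n m).eval ((m : ℝ) / (n + 1)) =
      (bernsteinTail (n + 1) (m + 1)).eval ((m : ℝ) / (n + 1)) := by
  have : (m : ℝ) - n * (m / (n + 1)) = m / (n + 1) := by field_simp; ring
  simp [tailInterpolant, bernsteinTail_succ_succ hmn, this]

theorem derivative_tailInterpolant {n m : ℕ} (hmn : m < n) :
    derivative (tailInterpolant (n + 1) (m + 1)) =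
      ((n : ℝ[X]) + 1) * (((m : ℝ[X]) + 1) - ((n : ℝ[X]) + 2) * X) *
        (bernsteinPolynomial ℝ n m - bernsteinPolynomial ℝ n (m + 1)) := by
  rw [tailInterpolant, derivative_add, derivative_mul, bernsteinPolynomial.derivative_succ_aux,
    derivative_bernsteinTail_succ hmn, bernsteinPolynomial.succ_succ n m]
  simp only [derivative_sub, derivative_mul, derivative_natCast, derivative_X]
  push_cast
  ring

theorem tailInterpolant_antitoneOn {n m : ℕ} (hm : 0 < m) (hmn : m < n) :
    AntitoneOn (fun q => (tailInterpolant n m).eval q) (Set.Icc ((m : ℝ) / (n + 1)) (m / n)) := by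
  obtain ⟨m, rfl⟩ : ∃ m', m = m' + 1 := ⟨m - 1, by omega⟩
  obtain ⟨n, rfl⟩ : ∃ n', n = n' + 1 := ⟨n - 1, by omega⟩
  refine antitoneOn_of_deriv_nonpos (convex_Icc _ _) (tailInterpolant _ _).continuousOn
    (tailInterpolant _ _).differentiable.differentiableOn ?_
  intro q hq
  rw [interior_Icc] at hq
  obtain ⟨hlo, hhi⟩ := hq
  push_cast at hlo hhi
  rw [div_lt_iff₀ (by positivity)] at hlo
  rw [lt_div_iff₀ (by positivity)] at hhi
  have hq₀ : 0 < q := by nlinarith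
  have hq₁ : q < 1 := by
    have : (m : ℝ) + 1 < n + 1 := by exact_mod_cast hmn
    nlinarith
  have hdecr :=
    bernsteinPolynomial.eval_succ_le_eval (R := ℝ) (by omega : m ≤ n) hq₀.le hq₁ (by linarith)
  rw [Polynomial.deriv, derivative_tailInterpolant (by omega)]
  simp only [eval_mul, eval_sub, eval_add, eval_natCast, eval_one, eval_X, eval_ofNat]
  refine mul_nonpos_of_nonpos_of_nonneg (mul_nonpos_of_nonneg_of_nonpos ?_ ?_) (sub_nonneg.2 hdecr)
  · positivity
  · linarith

theorem div_succ_pow_succ_le_succ (m : ℕ) (hm : 0 < m) :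
    ((m : ℝ) / (m + 1)) ^ (m + 1) ≤ ((m + 1 : ℝ) / (m + 2)) ^ (m + 2) := by
  have hm' : (0 : ℝ) < m := by exact_mod_cast hm
  set a : ℝ := m / (m + 1)
  set b : ℝ := (m + 1) / (m + 2)
  set x : ℝ := 1 / (m * (m + 2))
  have hx : 0 ≤ x := by positivity
  have hba : b = a * (1 + x) := by
    simp only [a, b, x]; field_simp; ring
  have hbernoulli : 1 ≤ (1 + (m + 1) * x) * b := by
    have h : (1 + (m + 1) * x) * b = 1 + 1 / (m * (m + 2) ^ 2) := by
      simp only [b, x]; field_simp; ring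
    rw [h]
    linarith [show (0 : ℝ) ≤ 1 / (m * (m + 2) ^ 2) by positivity]
  calc a ^ (m + 1) ≤ a ^ (m + 1) * ((1 + (m + 1) * x) * b) :=
        le_mul_of_one_le_right (by positivity) hbernoulli
    _ ≤ a ^ (m + 1) * ((1 + x) ^ (m + 1) * b) := by
        gcongr
        simpa using one_add_mul_le_pow (by linarith : -2 ≤ x) (m + 1)
    _ = b ^ (m + 2) := by rw [hba, mul_pow]; ring

theorem quarter_le_div_succ_pow_succ {m : ℕ} (hm : 0 < m) :
    1 / 4 ≤ ((m : ℝ) / (m + 1)) ^ (m + 1) := by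
  induction m, hm using Nat.le_induction with
  | base => norm_num
  | succ m hm ih =>
    push_cast
    exact ih.trans (by simpa [add_assoc, one_add_one_eq_two] using div_succ_pow_succ_le_succ m hm)

theorem eval_bernsteinTail_div_le_div_succ {n m : ℕ} (hm : 0 < m) (hmn : m < n) :
    (bernsteinTail n (m + 1)).eval ((m : ℝ) / n) ≤
      (bernsteinTail (n + 1) (m + 1)).eval ((m : ℝ) / (n + 1)) := by
  have hn : (0 : ℝ) < n := by exact_mod_cast hm.trans hmn
  have hle : (m : ℝ) / (n + 1) ≤ m / n := by gcongr; linarith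
  rw [← eval_tailInterpolant_div_self (by omega), ← eval_tailInterpolant_div_succ hmn.le]
  exact tailInterpolant_antitoneOn hm hmn ⟨le_rfl, hle⟩ ⟨hle, le_rfl⟩ hle

theorem div_succ_pow_succ_le_eval_bernsteinTail {n m : ℕ} (hm : 0 < m) (hmn : m < n) :
    ((m : ℝ) / (m + 1)) ^ (m + 1) ≤ (bernsteinTail n (m + 1)).eval ((m : ℝ) / n) := by
  induction n, hmn using Nat.le_induction with
  | base => simp [bernsteinTail_self]
  | succ n hmn ih => exact_mod_cast ih.trans (eval_bernsteinTail_div_le_div_succ hm hmn)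

/-- A binomial random variable exceeds its mean with probability greater
than `1/4` whenever `p > 1/n`. -/
theorem binomial_exceeds_mean (n : ℕ) (p : ℝ) (hp1 : p ≤ 1)
    (hp : 1 / (n : ℝ) < p) :
    binomTailGE n p ((n : ℝ) * p) > 1 / 4 := by
  rcases Nat.eq_zero_or_pos n with rfl | hn
  · norm_num [binomTailGE]
  have hn' : (0 : ℝ) < n := by exact_mod_cast hn
  have hp0 : 0 < p := lt_of_le_of_lt (by positivity) hp
  have hmean : 1 < (n : ℝ) * p := by rwa [div_lt_iff₀ hn', mul_comm] at hp
  have hceil_gt : 1 < ⌈(n : ℝ) * p⌉₊ := Nat.lt_ceil.2 (by exact_mod_cast hmean)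
  obtain ⟨m, hceil⟩ : ∃ m, ⌈(n : ℝ) * p⌉₊ = m + 1 := ⟨_, (Nat.succ_pred_eq_of_pos (by omega)).symm⟩
  have hm : 0 < m := by omega
  have hmn : m < n := by
    have := Nat.ceil_le.2 (mul_le_of_le_one_right hn'.le hp1)
    omega
  have hmp : (m : ℝ) / n < p := by
    have := Nat.ceil_lt_add_one (mul_nonneg hn'.le hp0.le)
    rw [hceil] at this
    push_cast at this
    rw [div_lt_iff₀ hn']
    linarith
  rw [binomTailGE_eq_eval_bernsteinTail, hceil, gt_iff_lt]
  calc 1 / 4 ≤ ((m : ℝ) / (m + 1)) ^ (m + 1) := quarter_le_div_succ_pow_succ hm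
    _ ≤ (bernsteinTail n (m + 1)).eval ((m : ℝ) / n) :=
      div_succ_pow_succ_le_eval_bernsteinTail hm hmn
    _ < (bernsteinTail n (m + 1)).eval p :=
      bernsteinTail_strictMonoOn m.succ_pos hmn
        ⟨by positivity, (div_le_one hn').2 (by exact_mod_cast hmn.le)⟩ ⟨hp0.le, hp1⟩ hmp
end

section
/- Let A ~ PE(a, b, n-(a+b)) be a Pólya-Eggenberger distributed random variable with a+b ≥ 1, and let μ = (a/(a+b))·n. Then there exists a constant ε_p ∈ (0,1) such that for any δ with 0 < δ < √a: Pr[A < μ - √a·(n/(a+b))·δ] < 4·exp(-ε_p·δ²) and Pr[A > μ + √a·(n/(a+b))·δ] < 4·exp(-ε_p·δ²). -/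
/-- Probability that the Pólya–Eggenberger process starting with `a` red and
`b` blue balls adds exactly `j` red balls during `m` steps, so that the urn
ends with `a + j` red balls (`PE(a,b,m) = a + j` with this probability). -/
noncomputable def pePMF (a b m j : ℕ) : ℝ :=
  (m.choose j : ℝ) * (Nat.ascFactorial a j : ℝ) * (Nat.ascFactorial b (m - j) : ℝ) /
    (Nat.ascFactorial (a + b) m : ℝ)

/-- `Pr[PE(a,b,m) < t]`: the total number of red balls is below `t`. -/
noncomputable def peTailLT (a b m : ℕ) (t : ℝ) : ℝ :=
  ∑ j ∈ Finset.range (m + 1), if ((a + j : ℕ) : ℝ) < t then pePMF a b m j else 0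

/-- `Pr[PE(a,b,m) > t]`: the total number of red balls is above `t`. -/
noncomputable def peTailGT (a b m : ℕ) (t : ℝ) : ℝ :=
  ∑ j ∈ Finset.range (m + 1), if t < ((a + j : ℕ) : ℝ) then pePMF a b m j else 0

/-! The `r`-th falling factorial moment of the number `J` of red balls added is
`E[J (J-1) ⋯ (J-r+1)] = ∏_{i<r} (m-i)(a+i)/(a+b+i)`: size-biasing turns `PE(a,b,m)` into
`PE(a+1,b,m-1)`, and the case `r = 0` is the Chu–Vandermonde identity for rising factorials.
Markov's inequality for this moment with `r ≈ (a+b)s / (2(b+s))` bounds the probability that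
more than `(n/(a+b))(a+s)` red balls end up in the urn by `exp(-(a+b)s² / (6(a+s)(b+s)))`:
if `T` is the corresponding threshold for `J`, each factor `(m-i)(a+i) / ((a+b+i)(T-i))` of the
resulting product is at most `1 - s/(3(a+s))`.
For `s = √a δ ≤ a` the exponent is at least `δ²/12`. The lower tail is the upper tail with
the colours swapped. -/

open Finset Real

theorem add_ascFactorial_eq (x y k : ℕ) :
    (x + y).ascFactorial k =
      ∑ ij ∈ antidiagonal k, k.choose ij.1 * x.ascFactorial ij.1 * y.ascFactorial ij.2 := by
  induction k with
  | zero => simp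
  | succ k ih =>
    simp only [mul_assoc]
    have split :=
      sum_antidiagonal_choose_succ_nsmul (fun i j => x.ascFactorial i * y.ascFactorial j) k
    simp only [smul_eq_mul] at split
    rw [split, Nat.ascFactorial_succ, ih, mul_sum, ← sum_add_distrib]
    refine sum_congr rfl fun ij hij => ?_
    rw [HasAntidiagonal.mem_antidiagonal] at hij
    rw [← Nat.choose_symm_of_eq_add hij.symm, Nat.ascFactorial_succ, Nat.ascFactorial_succ,
      ← hij]
    ring

lemma pePMF_nonneg (x y m j : ℕ) : 0 ≤ pePMF x y m j := by
  unfold pePMF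
  positivity

lemma sum_pePMF_eq_one {x y : ℕ} (hc : 1 ≤ x + y) (m : ℕ) :
    ∑ j ∈ range (m + 1), pePMF x y m j = 1 := by
  have hD : ((x + y).ascFactorial m : ℝ) ≠ 0 := by
    obtain ⟨c, hc⟩ := Nat.exists_eq_add_of_le' hc
    rw [hc]
    positivity
  rw [← div_self hD]
  simp only [pePMF, ← sum_div]
  rw [add_ascFactorial_eq, Nat.sum_antidiagonal_eq_sum_range_succ_mk]
  push_cast
  rfl

lemma succ_mul_pePMF_succ (x y m j : ℕ) :
    ((j : ℝ) + 1) * pePMF x y (m + 1) (j + 1) = (m + 1) * x / (x + y) * pePMF (x + 1) y m j := by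
  have hchoose : ((m + 1).choose (j + 1) : ℝ) * (j + 1) = (m + 1) * m.choose j := by
    exact_mod_cast (Nat.add_one_mul_choose_eq m j).symm
  have hasc (c k : ℕ) : (c.ascFactorial (k + 1) : ℝ) = c * (c + 1).ascFactorial k := by
    rw [add_comm k 1, ← Nat.ascFactorial_mul_ascFactorial c 1 k]
    simp [Nat.ascFactorial_succ]
  simp only [pePMF, hasc, Nat.add_sub_add_right, add_right_comm x 1 y]
  push_cast
  simp only [div_eq_mul_inv, mul_inv]
  linear_combination (x * ((x + 1).ascFactorial j : ℝ) * (y.ascFactorial (m - j) : ℝ) *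
    ((x : ℝ) + y)⁻¹ * ((x + y + 1).ascFactorial m : ℝ)⁻¹) * hchoose

theorem sum_pePMF_mul_descFactorial {x y : ℕ} (hc : 1 ≤ x + y) (m r : ℕ) :
    ∑ j ∈ range (m + 1), pePMF x y m j * j.descFactorial r =
      ∏ i ∈ range r, ((m : ℝ) - i) * (x + i) / (x + y + i) := by
  induction r generalizing x m with
  | zero => simp [sum_pePMF_eq_one hc]
  | succ r ih =>
    cases m with
    | zero => simp [prod_range_succ']
    | succ m =>
      have hshift (j : ℕ) : pePMF x y (m + 1) (j + 1) * ((j + 1).descFactorial (r + 1) : ℝ) =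
          (m + 1) * x / (x + y) * (pePMF (x + 1) y m j * j.descFactorial r) := by
        rw [← mul_assoc, ← succ_mul_pePMF_succ, Nat.succ_descFactorial_succ]
        push_cast
        ring
      rw [sum_range_succ', prod_range_succ']
      simp only [hshift, ← mul_sum, ih (x := x + 1) (by omega), Nat.zero_descFactorial_succ,
        Nat.cast_zero, mul_zero, add_zero, sub_zero, mul_comm _ (_ / _)]
      push_cast
      congr 1
      exact prod_congr rfl fun i _ => by congr 1 <;> ring

lemma prod_sub_le_descFactorial {T : ℝ} {r j : ℕ} (hT : ∀ i < r, (i : ℝ) < T) (hj : T < j) :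
    ∏ i ∈ range r, (T - i) ≤ j.descFactorial r := by
  have hrj : r ≤ j := by
    by_contra! h
    exact (hT j h).not_gt hj
  rw [Nat.descFactorial_eq_prod_range, Nat.cast_prod]
  refine prod_le_prod (fun i hi => (sub_pos.2 (hT i (mem_range.1 hi))).le) fun i hi => ?_
  rw [Nat.cast_sub ((mem_range.1 hi).le.trans hrj)]
  linarith

lemma peTailGT_le_sum_mul_descFactorial_div (x y m : ℕ) {T : ℝ} {r : ℕ}
    (hT : ∀ i < r, (i : ℝ) < T) :
    peTailGT x y m (x + T) ≤
      (∑ j ∈ range (m + 1), pePMF x y m j * j.descFactorial r) /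
        ∏ i ∈ range r, (T - i) := by
  have hP : 0 < ∏ i ∈ range r, (T - i) :=
    prod_pos fun i hi => sub_pos.2 (hT i (mem_range.1 hi))
  rw [peTailGT, sum_div]
  refine sum_le_sum fun j _ => ?_
  split_ifs with hj
  · rw [le_div_iff₀ hP]
    refine mul_le_mul_of_nonneg_left (prod_sub_le_descFactorial hT ?_) (pePMF_nonneg x y m j)
    push_cast at hj
    linarith
  · exact div_nonneg (mul_nonneg (pePMF_nonneg x y m j) (Nat.cast_nonneg _)) hP.le

lemma peTailGT_eq_zero (x y m : ℕ) {t : ℝ} (ht : x + m ≤ t) : peTailGT x y m t = 0 := by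
  refine sum_eq_zero fun j hj => if_neg ?_
  have : j ≤ m := Nat.lt_succ_iff.1 (mem_range.1 hj)
  push_cast
  exact not_lt.2 (ht.trans' (by exact_mod_cast Nat.add_le_add_left this x))

lemma moment_factor_le {x y m s T i : ℝ} (hx : 0 ≤ x) (hy : 0 ≤ y) (hm : 0 ≤ m) (hs : 0 < s)
    (hC : 0 < x + y) (hT : (x + y) * T = m * x + (x + y + m) * s) (hi : 0 ≤ i)
    (hiR : i < (x + y) * s / (2 * (y + s))) (hiT : i < T) :
    (m - i) * (x + i) / ((x + y + i) * (T - i)) ≤ 1 - s / (3 * (x + s)) := by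
  set C := x + y
  have hys : 0 < y + s := by positivity
  replace hiR : 2 * i * (y + s) ≤ C * s := by
    rw [lt_div_iff₀ (by positivity)] at hiR
    linarith
  rw [div_le_iff₀ (mul_pos (by linarith) (by linarith))]
  have hgap : C * ((C + i) * (T - i) - (m - i) * (x + i)) = (C + m) * (C * s - i * (y - s)) := by
    linear_combination (C + i) * hT
  set q := s / (3 * (x + s))
  have hi2 : 2 * i ≤ C := le_of_mul_le_mul_right (by nlinarith) hys
  have hCT : C * (T - i) ≤ (C + m) * (x + s) := by nlinarith [mul_nonneg hC.le hi]
  have hden : C * ((C + i) * (T - i)) ≤ 3 / 2 * C * ((C + m) * (x + s)) := by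
    rw [mul_left_comm]
    exact mul_le_mul (by linarith) hCT (by nlinarith) (by positivity)
  have hq : q * (3 / 2 * C * ((C + m) * (x + s))) = (C + m) * (C * s / 2) := by
    simp only [q]
    field_simp
  have hnum : i * (y - s) ≤ C * s / 2 := by nlinarith [mul_nonneg hi hs.le]
  have h1 := mul_le_mul_of_nonneg_left hden (by positivity : 0 ≤ q)
  have h2 := mul_le_mul_of_nonneg_left hnum (by positivity : 0 ≤ C + m)
  refine le_of_mul_le_mul_left ?_ hC
  linarith

lemma moment_order_lt_threshold {x y m s T : ℝ} (hx : 0 ≤ x) (hy : 0 ≤ y) (hm : 0 ≤ m)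
    (hs : 0 < s) (hC : 0 < x + y) (hT : (x + y) * T = m * x + (x + y + m) * s) (hTm : T < m) :
    (x + y) * s / (2 * (y + s)) < T := by
  have hmy : (x + y + m) * s < m * y := by nlinarith [mul_lt_mul_of_pos_left hTm hC]
  rw [div_lt_iff₀ (by positivity)]
  refine lt_of_mul_lt_mul_left ?_ hC.le
  rw [show (x + y) * (T * (2 * (y + s))) = 2 * (y + s) * ((x + y) * T) by ring, hT]
  linarith [mul_le_mul_of_nonneg_right hmy.le hx, mul_pos (mul_pos hC hC) hs,
    mul_nonneg (mul_nonneg hm hs.le) hC.le, mul_nonneg (mul_nonneg hm hs.le) hx,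
    mul_nonneg (mul_nonneg hs.le hs.le) (add_nonneg hC.le hm)]

theorem peTailGT_le_exp (x y m : ℕ) {s : ℝ} (hs : 0 < s) (hc : 1 ≤ x + y) :
    peTailGT x y m ((x + y + m) / (x + y) * (x + s)) ≤
      exp (-((x + y) * s ^ 2 / (6 * ((x + s) * (y + s))))) := by
  have hC : (0 : ℝ) < x + y := by exact_mod_cast hc
  set C : ℝ := x + y
  set T := (m * x + (C + m) * s) / C
  have hT : C * T = m * x + (C + m) * s := mul_div_cancel₀ _ hC.ne'
  rw [show (C + m) / C * (x + s) = x + T by field_simp; linear_combination -hT]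
  rcases le_or_gt (m : ℝ) T with hmT | hTm
  · rw [peTailGT_eq_zero x y m (by linarith)]
    positivity
  set R := C * s / (2 * (y + s))
  set q := s / (3 * (x + s))
  have hRT : R < T := moment_order_lt_threshold (Nat.cast_nonneg x) (Nat.cast_nonneg y)
    (Nat.cast_nonneg m) hs hC hT hTm
  have hiR : ∀ i < ⌈R⌉₊, (i : ℝ) < R := fun i hi => Nat.lt_ceil.1 hi
  have hq1 : q ≤ 1 := div_le_one_of_le₀ (by linarith) (by positivity)
  calc peTailGT x y m (x + T)
      ≤ (∑ j ∈ range (m + 1), pePMF x y m j * j.descFactorial ⌈R⌉₊) /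
          ∏ i ∈ range ⌈R⌉₊, (T - i) :=
        peTailGT_le_sum_mul_descFactorial_div x y m fun i hi => (hiR i hi).trans hRT
    _ = ∏ i ∈ range ⌈R⌉₊, ((m : ℝ) - i) * (x + i) / ((C + i) * (T - i)) := by
        rw [sum_pePMF_mul_descFactorial hc, ← prod_div_distrib]
        simp only [div_div, C]
    _ ≤ ∏ _i ∈ range ⌈R⌉₊, (1 - q) := by
        refine prod_le_prod (fun i hi => ?_) fun i hi => ?_
        all_goals have hiT := (hiR i (mem_range.1 hi)).trans hRT
        · exact div_nonneg (mul_nonneg (by linarith) (by positivity))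
            (mul_pos (by positivity) (by linarith)).le
        · exact moment_factor_le (Nat.cast_nonneg x) (Nat.cast_nonneg y) (Nat.cast_nonneg m) hs
            hC hT (Nat.cast_nonneg i) (hiR i (mem_range.1 hi)) hiT
    _ = (1 - q) ^ ⌈R⌉₊ := by rw [prod_const, card_range]
    _ ≤ exp (-q) ^ ⌈R⌉₊ := pow_le_pow_left₀ (by linarith) (one_sub_le_exp_neg q) _
    _ = exp (-(q * ⌈R⌉₊)) := by rw [← exp_nat_mul]; ring_nf
    _ ≤ exp (-(q * R)) := by gcongr; exact Nat.le_ceil R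
    _ = exp (-(C * s ^ 2 / (6 * ((x + s) * (y + s))))) := by
        congr 2
        simp only [q, R]
        field_simp
        ring

lemma pePMF_swap {a b m j : ℕ} (hj : j ≤ m) : pePMF b a m (m - j) = pePMF a b m j := by
  rw [pePMF, pePMF, Nat.choose_symm hj, Nat.sub_sub_self hj, add_comm b a]
  ring

lemma peTailLT_eq_peTailGT_swap (a b m : ℕ) (t : ℝ) :
    peTailLT a b m t = peTailGT b a m (a + b + m - t) := by
  rw [peTailGT, ← sum_range_reflect]
  refine sum_congr rfl fun j hj => ?_
  have hjm : j ≤ m := Nat.lt_succ_iff.1 (mem_range.1 hj)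
  rw [Nat.add_sub_cancel, pePMF_swap hjm]
  push_cast [Nat.cast_sub hjm]
  exact if_congr (by constructor <;> intro h <;> linarith) rfl rfl

lemma sq_div_twelve_le {a b s δ : ℝ} (ha : 0 < a) (hb : 0 ≤ b) (hs : 0 < s) (hsa : s ≤ a)
    (hsδ : s ^ 2 = a * δ ^ 2) : δ ^ 2 / 12 ≤ (a + b) * s ^ 2 / (6 * ((a + s) * (b + s))) := by
  have hprod : (a + s) * (b + s) ≤ 2 * a * (a + b) := by nlinarith
  rw [div_le_div_iff₀ (by norm_num) (by positivity), hsδ]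
  nlinarith [mul_le_mul_of_nonneg_left hprod (sq_nonneg δ)]

/-- Concentration of the Pólya–Eggenberger distribution `PE(a, b, n-(a+b))`
around its mean `μ = (a/(a+b))·n`. -/
theorem polya_eggenberger_concentration :
    ∃ εp : ℝ, 0 < εp ∧ εp < 1 ∧
      ∀ a b n : ℕ, 1 ≤ a + b → a + b ≤ n →
        ∀ δ : ℝ, 0 < δ → δ < Real.sqrt a →
          peTailLT a b (n - (a + b))
              ((a : ℝ) / ((a : ℝ) + b) * n - Real.sqrt a * ((n : ℝ) / ((a : ℝ) + b)) * δ) <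
            4 * Real.exp (-εp * δ ^ 2) ∧
          peTailGT a b (n - (a + b))
              ((a : ℝ) / ((a : ℝ) + b) * n + Real.sqrt a * ((n : ℝ) / ((a : ℝ) + b)) * δ) <
            4 * Real.exp (-εp * δ ^ 2) := by
  refine ⟨1 / 12, by norm_num, by norm_num, fun a b n hab hn δ hδ hδa => ?_⟩
  obtain ⟨m, rfl⟩ : ∃ m, n = a + b + m := ⟨n - (a + b), by omega⟩
  have ha : (0 : ℝ) < a := Real.sqrt_pos.1 (hδ.trans hδa)
  have hC : (a : ℝ) + b ≠ 0 := by positivity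
  set s := √(a : ℝ) * δ
  have hs : 0 < s := by positivity
  have hsa : s ≤ a := by
    calc s ≤ √(a : ℝ) * √(a : ℝ) := mul_le_mul_of_nonneg_left hδa.le (Real.sqrt_nonneg _)
      _ = a := Real.mul_self_sqrt ha.le
  have hsδ : s ^ 2 = a * δ ^ 2 := by rw [mul_pow, Real.sq_sqrt ha.le]
  have hexp : exp (-((a + b) * s ^ 2 / (6 * ((a + s) * (b + s))))) < 4 * exp (-(1 / 12) * δ ^ 2) :=
    calc exp (-((a + b) * s ^ 2 / (6 * ((a + s) * (b + s)))))
        ≤ exp (-(1 / 12) * δ ^ 2) :=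
          exp_le_exp.2 (by linarith [sq_div_twelve_le ha (Nat.cast_nonneg b) hs hsa hsδ])
      _ < 4 * exp (-(1 / 12) * δ ^ 2) := by linarith [exp_pos (-(1 / 12) * δ ^ 2)]
  rw [Nat.add_sub_cancel_left]
  push_cast
  constructor
  · rw [peTailLT_eq_peTailGT_swap, show (a + b + m : ℝ) - (a / (a + b) * (a + b + m) -
        √(a : ℝ) * ((a + b + m) / (a + b)) * δ) = (b + a + m) / (b + a) * (b + s) by
      field_simp; ring]
    refine (peTailGT_le_exp b a m hs (by omega)).trans_lt ?_
    rwa [add_comm (b : ℝ), mul_comm ((b : ℝ) + s)]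
  · rw [show (a / (a + b) * (a + b + m) + √(a : ℝ) * ((a + b + m) / (a + b)) * δ : ℝ) =
        (a + b + m) / (a + b) * (a + s) by field_simp; ring]
    exact (peTailGT_le_exp a b m hs (by omega)).trans_lt hexp
end
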